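/- For A, B ∈ M^{2×2}(ℝ) with det A > 0, det B > 0, the anticonformal part of AB^{-1} satisfies [AB^{-1}]_a = (μ_A - μ_B)·[A]_c·I·[B^{-1}]_c, where I = diag(1,-1). -/
import Mathlib


/-- Conformal part of a 2×2 real matrix. -/
noncomputable def confPart (A : Matrix (Fin 2) (Fin 2) ℝ) : Matrix (Fin 2) (Fin 2) ℝ :=
  (1 / 2 : ℝ) • !![A 0 0 + A 1 1, -(A 1 0 - A 0 1); A 1 0 - A 0 1, A 0 0 + A 1 1]

/-- Anticonformal part of a 2×2 real matrix. -/
noncomputable def antiPart (A : Matrix (Fin 2) (Fin 2) ℝ) : Matrix (Fin 2) (Fin 2) ℝ :=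
  (1 / 2 : ℝ) • !![A 0 0 - A 1 1, A 1 0 + A 0 1; A 1 0 + A 0 1, -(A 0 0 - A 1 1)]

/-- The reflection matrix I = diag(1,-1). -/
noncomputable def I2 : Matrix (Fin 2) (Fin 2) ℝ := !![1, 0; 0, -1]

/-- The Beltrami coefficient of A: the (conformal) matrix μ_A with [A]_a·I = μ_A·[A]_c. -/
noncomputable def beltrami (A : Matrix (Fin 2) (Fin 2) ℝ) : Matrix (Fin 2) (Fin 2) ℝ :=
  antiPart A * I2 * (confPart A)⁻¹


lemma L1 (M N : Matrix (Fin 2) (Fin 2) ℝ) :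
    antiPart (M * N) = confPart M * antiPart N + antiPart M * confPart N := by
  ext i j
  fin_cases i <;> fin_cases j <;>
    simp [confPart, antiPart, Matrix.mul_apply, Fin.sum_univ_two] <;> ring

lemma L2 : antiPart (1 : Matrix (Fin 2) (Fin 2) ℝ) = 0 := by
  ext i j
  fin_cases i <;> fin_cases j <;> simp [antiPart, Matrix.one_apply]

lemma L3 (N : Matrix (Fin 2) (Fin 2) ℝ) :
    confPart N * (I2 * confPart N * I2) = (confPart N).det • (1 : Matrix (Fin 2) (Fin 2) ℝ) := by
  ext i j
  fin_cases i <;> fin_cases j <;>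
    simp [confPart, I2, Matrix.mul_apply, Fin.sum_univ_two, Matrix.det_fin_two,
      Matrix.one_apply] <;> ring

lemma L3' (N : Matrix (Fin 2) (Fin 2) ℝ) :
    (I2 * confPart N * I2) * confPart N = (confPart N).det • (1 : Matrix (Fin 2) (Fin 2) ℝ) := by
  ext i j
  fin_cases i <;> fin_cases j <;>
    simp [confPart, I2, Matrix.mul_apply, Fin.sum_univ_two, Matrix.det_fin_two,
      Matrix.one_apply] <;> ring

lemma confPart_eq (M : Matrix (Fin 2) (Fin 2) ℝ) :
    confPart M = !![(M 0 0 + M 1 1)/2, -((M 1 0 - M 0 1)/2);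
                    (M 1 0 - M 0 1)/2, (M 0 0 + M 1 1)/2] := by
  ext i j
  fin_cases i <;> fin_cases j <;> simp [confPart] <;> ring

lemma antiPart_eq (M : Matrix (Fin 2) (Fin 2) ℝ) :
    antiPart M = !![(M 0 0 - M 1 1)/2, (M 1 0 + M 0 1)/2;
                    (M 1 0 + M 0 1)/2, -((M 0 0 - M 1 1)/2)] := by
  ext i j
  fin_cases i <;> fin_cases j <;> simp [antiPart] <;> ring

lemma L4lit (p q r s u v x y : ℝ) :
    !![r,s;s,-r] * I2 * (I2 * !![p,-q;q,p] * I2) * !![u,-v;v,u] * I2 * !![x,-y;y,x]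
      = !![u,-v;v,u] * ((I2 * !![p,-q;q,p] * I2) * (!![r,s;s,-r] * !![x,-y;y,x])) := by
  ext i j
  fin_cases i <;> fin_cases j <;>
    simp [I2, Matrix.mul_apply, Fin.sum_univ_two] <;> ring

lemma L4 (M N P : Matrix (Fin 2) (Fin 2) ℝ) :
    antiPart N * I2 * (I2 * confPart N * I2) * confPart M * I2 * confPart P
      = confPart M * ((I2 * confPart N * I2) * (antiPart N * confPart P)) := by
  rw [confPart_eq M, confPart_eq N, confPart_eq P, antiPart_eq N]
  exact L4lit _ _ _ _ _ _ _ _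

lemma L5 : I2 * I2 = (1 : Matrix (Fin 2) (Fin 2) ℝ) := by
  ext i j
  fin_cases i <;> fin_cases j <;> simp [I2, Matrix.mul_apply, Fin.sum_univ_two, Matrix.one_apply]

lemma det_confPart_ne (M : Matrix (Fin 2) (Fin 2) ℝ) (h : 0 < M.det) :
    (confPart M).det ≠ 0 := by
  have hdc : (confPart M).det = ((M 0 0 + M 1 1)^2 + (M 1 0 - M 0 1)^2)/4 := by
    simp [confPart, Matrix.det_fin_two]
    ring
  rw [Matrix.det_fin_two] at h
  rw [hdc]
  have : 0 < ((M 0 0 + M 1 1)^2 + (M 1 0 - M 0 1)^2)/4 := by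
    nlinarith [sq_nonneg (M 0 0 - M 1 1), sq_nonneg (M 1 0 + M 0 1)]
  exact this.ne'

/-- [AB⁻¹]_a = (μ_A - μ_B)·[A]_c·I·[B⁻¹]_c for A, B with positive determinant. -/
theorem stmt9 (A B : Matrix (Fin 2) (Fin 2) ℝ) (hA : 0 < A.det) (hB : 0 < B.det) :
    antiPart (A * B⁻¹) = (beltrami A - beltrami B) * confPart A * I2 * confPart B⁻¹ := by
  have hdCA := det_confPart_ne A hA
  have hdCB := det_confPart_ne B hB
  have hCAinv : (confPart A)⁻¹ * confPart A = 1 :=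
    Matrix.nonsing_inv_mul _ (isUnit_iff_ne_zero.mpr hdCA)
  have hCBinv : (confPart B)⁻¹ = (confPart B).det⁻¹ • (I2 * confPart B * I2) := by
    apply Matrix.inv_eq_right_inv
    rw [Matrix.mul_smul, L3, smul_smul, inv_mul_cancel₀ hdCB, one_smul]
  have hBB : B * B⁻¹ = 1 := Matrix.mul_nonsing_inv B (isUnit_iff_ne_zero.mpr hB.ne')
  have h0 : confPart B * antiPart B⁻¹ + antiPart B * confPart B⁻¹ = 0 := by
    rw [← L1, hBB, L2]
  have h2 : antiPart B * confPart B⁻¹ = -(confPart B * antiPart B⁻¹) :=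
    eq_neg_of_add_eq_zero_right h0
  rw [L1 A B⁻¹]
  unfold beltrami
  rw [Matrix.sub_mul, Matrix.sub_mul, Matrix.sub_mul]
  rw [mul_assoc (antiPart A * I2) (confPart A)⁻¹ (confPart A), hCAinv, mul_one,
    mul_assoc (antiPart A) I2 I2, L5, mul_one]
  rw [hCBinv, Matrix.mul_smul, Matrix.smul_mul, Matrix.smul_mul, Matrix.smul_mul,
    L4 A B B⁻¹, h2, mul_neg, mul_neg, smul_neg,
    ← mul_assoc (I2 * confPart B * I2) (confPart B) (antiPart B⁻¹), L3',
    Matrix.smul_mul, one_mul, Matrix.mul_smul, smul_smul, inv_mul_cancel₀ hdCB, one_smul,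
    sub_neg_eq_add]
  abel
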